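/- Let θ₀ ∈ [0,2π), τ₀ ≠ 0 and n ≥ 1 be the parameters of a discrete helical lattice H₀ with reciprocal lattice H₀'. Then (α, β) ∈ ℤ × ℝ belongs to H₀' if and only if α·(2π/n) ∈ 2πℤ and αθ₀ + βτ₀ ∈ 2πℤ; explicitly, H₀' = { (i n, (−i n θ₀ + 2π j)/τ₀) : i, j ∈ ℤ }. -/

import Mathlib

noncomputable section

open Real

/-- Reduction of a real number modulo 2π into [0, 2π). -/
def mod2pi (x : ℝ) : ℝ := x - 2*Real.pi * ⌊x / (2*Real.pi)⌋

/-- The discrete helical lattice with parameters θ₀, τ₀, n: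
`H₀ = {((2πi/n + θ₀ j) mod 2π, τ₀ j) : i ∈ {0,…,n−1}, j ∈ ℤ} ⊂ [0,2π) × ℝ`. -/
def helLat (θ₀ τ₀ : ℝ) (n : ℕ) : Set (ℝ × ℝ) :=
  {p | ∃ i j : ℤ, 0 ≤ i ∧ i < (n : ℤ) ∧
    p = (mod2pi (2*Real.pi*i/n + θ₀*j), τ₀*j)}

/-- The reciprocal helical lattice:
`H₀' = {(α,β) ∈ ℤ × ℝ : αθ + βτ ∈ 2πℤ for all (θ,τ) ∈ H₀}`. -/
def helRec (θ₀ τ₀ : ℝ) (n : ℕ) : Set (ℤ × ℝ) :=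
  {q | ∀ p ∈ helLat θ₀ τ₀ n, ∃ m : ℤ, (q.1 : ℝ) * p.1 + q.2 * p.2 = 2*Real.pi*m}

/-! Reducing `θ` modulo `2π` changes `αθ + βτ` by an integer multiple of `2π α`, so the reduction
in the definition of `H₀` is invisible to `H₀'`. Hence `(α, β) ∈ H₀'` iff `α(2πi/n + θ₀ j) + βτ₀ j ∈ 2πℤ`
for all `i, j`, which is linear in `(i, j)`: it suffices to test the generators `(i, j) = (1, 0)`
(only present for `n ≥ 2`, and vacuous for `n = 1`) and `(0, 1)`. The first condition says
`n ∣ α`, and the second determines `β` from `α` up to `2πℤ / τ₀`. -/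

theorem exists_int_mul_mod2pi_add_iff (α : ℤ) (x y : ℝ) :
    (∃ m : ℤ, (α : ℝ) * mod2pi x + y = 2 * π * m) ↔ ∃ m : ℤ, (α : ℝ) * x + y = 2 * π * m := by
  set k := ⌊x / (2 * π)⌋
  have hmod : (α : ℝ) * mod2pi x + y = α * x + y - 2 * π * (α * k : ℤ) := by
    simp only [mod2pi, k]
    push_cast
    ring
  rw [hmod]
  constructor
  · rintro ⟨m, hm⟩
    exact ⟨m + α * k, by push_cast at hm ⊢; linarith⟩
  · rintro ⟨m, hm⟩
    exact ⟨m - α * k, by push_cast at hm ⊢; linarith⟩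

theorem mem_helRec_iff_forall {θ₀ τ₀ : ℝ} {n : ℕ} {α : ℤ} {β : ℝ} :
    (α, β) ∈ helRec θ₀ τ₀ n ↔ ∀ i j : ℤ, 0 ≤ i → i < n →
      ∃ m : ℤ, (α : ℝ) * (2 * π * i / n + θ₀ * j) + β * (τ₀ * j) = 2 * π * m := by
  simp only [helRec, helLat, Set.mem_ofPred_eq]
  constructor
  · intro h i j hi hin
    exact (exists_int_mul_mod2pi_add_iff _ _ _).1 (h _ ⟨i, j, hi, hin, rfl⟩)
  · rintro h _ ⟨i, j, hi, hin, rfl⟩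
    exact (exists_int_mul_mod2pi_add_iff _ _ _).2 (h i j hi hin)

theorem mem_helRec_iff {θ₀ τ₀ : ℝ} {n : ℕ} (hn : 1 ≤ n) {α : ℤ} {β : ℝ} :
    (α, β) ∈ helRec θ₀ τ₀ n ↔
      (∃ m : ℤ, (α : ℝ) * (2 * π / n) = 2 * π * m) ∧
      ∃ m : ℤ, (α : ℝ) * θ₀ + β * τ₀ = 2 * π * m := by
  rw [mem_helRec_iff_forall]
  constructor
  · intro h
    refine ⟨?_, ?_⟩
    · obtain rfl | hn2 := hn.eq_or_lt
      · exact ⟨α, by simp [mul_comm]⟩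
      · obtain ⟨m, hm⟩ := h 1 0 zero_le_one (by exact_mod_cast hn2)
        exact ⟨m, by simpa using hm⟩
    · obtain ⟨m, hm⟩ := h 0 1 le_rfl (by exact_mod_cast hn)
      exact ⟨m, by simpa using hm⟩
  · rintro ⟨⟨m₁, h₁⟩, ⟨m₂, h₂⟩⟩ i j - -
    refine ⟨i * m₁ + j * m₂, ?_⟩
    push_cast
    linear_combination (i : ℝ) * h₁ + (j : ℝ) * h₂

theorem exists_int_mul_two_pi_div_iff {n : ℕ} (hn : n ≠ 0) (α : ℤ) :
    (∃ m : ℤ, (α : ℝ) * (2 * π / n) = 2 * π * m) ↔ (n : ℤ) ∣ α := by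
  have key (m : ℤ) : (α : ℝ) * (2 * π / n) = 2 * π * m ↔ α = m * n := by
    rw [← @Int.cast_inj ℝ]
    push_cast
    field_simp
  simp only [key, dvd_iff_exists_eq_mul_left]

theorem helRec_explicit_general (θ₀ τ₀ : ℝ) (hτ₀ : τ₀ ≠ 0)
    (n : ℕ) (hn : 1 ≤ n) :
    (∀ (α : ℤ) (β : ℝ), (α, β) ∈ helRec θ₀ τ₀ n ↔
      ((∃ m : ℤ, (α : ℝ) * (2*Real.pi/n) = 2*Real.pi*m) ∧
       (∃ m : ℤ, (α : ℝ) * θ₀ + β * τ₀ = 2*Real.pi*m))) ∧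
    helRec θ₀ τ₀ n =
      {q : ℤ × ℝ | ∃ i j : ℤ,
        q = (i * n, (-(i : ℝ) * n * θ₀ + 2*Real.pi*j) / τ₀)} := by
  refine ⟨fun α β => mem_helRec_iff hn, ?_⟩
  ext ⟨α, β⟩
  simp only [mem_helRec_iff hn, exists_int_mul_two_pi_div_iff (by omega : n ≠ 0),
    Set.mem_ofPred_eq, Prod.mk.injEq, eq_div_iff hτ₀]
  constructor
  · rintro ⟨⟨i, rfl⟩, j, hj⟩
    exact ⟨i, j, mul_comm _ _, by push_cast at hj ⊢; linear_combination hj⟩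
  · rintro ⟨i, j, rfl, hβ⟩
    exact ⟨dvd_mul_left _ _, j, by push_cast; linear_combination hβ⟩

/-- Explicit description of the reciprocal helical lattice:
`(α,β) ∈ H₀'` iff `α·(2π/n) ∈ 2πℤ` and `αθ₀ + βτ₀ ∈ 2πℤ`, i.e.
`H₀' = {(in, (−inθ₀ + 2πj)/τ₀) : i, j ∈ ℤ}`. -/
theorem helRec_explicit (θ₀ τ₀ : ℝ) (hθ₀ : θ₀ ∈ Set.Ico 0 (2*Real.pi)) (hτ₀ : τ₀ ≠ 0)
    (n : ℕ) (hn : 1 ≤ n) :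
    (∀ (α : ℤ) (β : ℝ), (α, β) ∈ helRec θ₀ τ₀ n ↔
      ((∃ m : ℤ, (α : ℝ) * (2*Real.pi/n) = 2*Real.pi*m) ∧
       (∃ m : ℤ, (α : ℝ) * θ₀ + β * τ₀ = 2*Real.pi*m))) ∧
    helRec θ₀ τ₀ n =
      {q : ℤ × ℝ | ∃ i j : ℤ,
        q = (i * n, (-(i : ℝ) * n * θ₀ + 2*Real.pi*j) / τ₀)} :=
  helRec_explicit_general θ₀ τ₀ hτ₀ n hn
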